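/- Let L_i ⊆ A_i* (i = 1,…,n) and L_k ⊆ A_k* be prefix-closed languages with ∪_{i≠j}(A_i ∩ A_j) ⊆ A_k ⊆ A = ∪_{i=1}^n A_i, and let A_u ⊆ A. If K ⊆ ‖_{i=1}^n L_i ‖ L_k is prefix-closed, conditionally decomposable with respect to (A_i)_{i=1}^n and A_k, and conditionally controllable with respect to L_1,…,L_n, L_k, and A_u, then K is controllable with respect to ‖_{i=1}^n L_i ‖ L_k and A_u. -/

import Mathlib

variable {α : Type*}

/-- The natural projection onto subalphabet `B`: erases events not in `B`. -/
noncomputable def proj (B : Set α) (w : List α) : List α :=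
  w.filter fun a => @decide (a ∈ B) (Classical.propDecidable _)

/-- Words over alphabet `A`. -/
def Words (A : Set α) : Set (List α) := {w | ∀ a ∈ w, a ∈ A}

/-- Synchronous product of a family of languages `M i` over alphabets `B i`:
`‖_i M i = ⋂_i P_{B i}⁻¹ (M i)`, a language over `⋃ i, B i`. -/
def SyncProd {ι : Type*} (B : ι → Set α) (M : ι → Set (List α)) : Set (List α) :=
  {w | w ∈ Words (⋃ i, B i) ∧ ∀ i, proj (B i) w ∈ M i}

/-- Binary synchronous product of `M₁` over `B₁` and `M₂` over `B₂`. -/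
def sync2 (B₁ B₂ : Set α) (M₁ M₂ : Set (List α)) : Set (List α) :=
  {w | w ∈ Words (B₁ ∪ B₂) ∧ proj B₁ w ∈ M₁ ∧ proj B₂ w ∈ M₂}

/-- `K` is controllable with respect to `L` and uncontrollable events `Au`:
`K·Au ∩ L ⊆ K`. -/
def Controllable (K L : Set (List α)) (Au : Set α) : Prop :=
  ∀ s ∈ K, ∀ a ∈ Au, s ++ [a] ∈ L → s ++ [a] ∈ K

def PrefixClosed (L : Set (List α)) : Prop :=
  ∀ w ∈ L, ∀ v : List α, v <+: w → v ∈ L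

/-- The projection onto `B` is an `L`-observer. -/
def IsObserver (B : Set α) (L : Set (List α)) : Prop :=
  ∀ t ∈ proj B '' L, ∀ s ∈ L, proj B s <+: t →
    ∃ u : List α, s ++ u ∈ L ∧ proj B (s ++ u) = t

/-- The projection onto `Ao` is output control consistent (OCC) for `L`
(with uncontrollable events `Au`). -/
def OCC (Ao Au : Set α) (L : Set (List α)) : Prop :=
  ∀ s ∈ L, ∀ (mid : List α) (σk : α), σk ∈ Ao → (∀ a ∈ mid, a ∉ Ao) →
    (s = mid ++ [σk] ∨
      ∃ (s' : List α) (σ' : α), σ' ∈ Ao ∧ s = s' ++ σ' :: (mid ++ [σk])) →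
    σk ∈ Au → ∀ a ∈ mid, a ∈ Au

/-- Supremal controllable sublanguage of `K` w.r.t. `L` and `Au`:
the union of all sublanguages of `K` controllable w.r.t. `L` and `Au`. -/
def supC (K L : Set (List α)) (Au : Set α) : Set (List α) :=
  ⋃₀ {M | M ⊆ K ∧ Controllable M L Au}

/-- C&P coobservability of `K'` w.r.t. plant `L`, observation alphabets `Bo i`
and local controllable alphabets `Bc i`. -/
def Coobservable {ι : Type*} (Bo Bc : ι → Set α) (L K' : Set (List α)) : Prop :=
  ∀ s ∈ K', ∀ a ∈ ⋃ i, Bc i, s ++ [a] ∈ L → s ++ [a] ∉ K' →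
    ∃ i, a ∈ Bc i ∧
      ∀ s' ∈ Words (⋃ j, Bo j), proj (Bo i) s' = proj (Bo i) s → s' ++ [a] ∉ K'

/-- The closed-loop language of supervisor `S` over plant `M`:
the smallest language containing `ε` and closed under enabled extensions in `M`. -/
inductive InClosedLoop (S : List α → Set α) (M : Set (List α)) : List α → Prop
  | nil : InClosedLoop S M []
  | step {s : List α} {a : α} : InClosedLoop S M s → s ++ [a] ∈ M → a ∈ S s →
      InClosedLoop S M (s ++ [a])

def ClosedLoop (S : List α → Set α) (M : Set (List α)) : Set (List α) :=
  {w | InClosedLoop S M w}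

/-- A supervisor over alphabet `B` whose control patterns contain the
uncontrollable events `Bu` (i.e. `Bu ⊆ S s ⊆ B`). -/
def IsSupervisor (B Bu : Set α) (S : List α → Set α) : Prop :=
  ∀ s : List α, Bu ⊆ S s ∧ S s ⊆ B

/-- The coordinator language `L_k = ‖_{i=1}^n P_k (L i)` (each `P_k(L i)` being a
language over `A i ∩ Ak`). -/
def coordLang {n : ℕ} (A : Fin n → Set α) (Ak : Set α) (L : Fin n → Set (List α)) :
    Set (List α) :=
  SyncProd (fun i => A i ∩ Ak) (fun i => proj Ak '' L i)

/-- Two-level conditional controllability of `K` w.r.t. plants `L i` over `A i`,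
grouping `g`, group-coordinator alphabets `Akj j` (coordinators
`L_{k_j} = ‖_i P_{k_j}(L i)`), and uncontrollable events `Au`. -/
def TwoLevelCC {n m : ℕ} (A : Fin n → Set α) (g : Fin n → Fin m) (Akj : Fin m → Set α)
    (L : Fin n → Set (List α)) (Au : Set α) (K : Set (List α)) : Prop :=
  (∀ j : Fin m, Controllable (proj (Akj j) '' K) (coordLang A (Akj j) L) (Akj j ∩ Au)) ∧
  (∀ i : Fin n, Controllable (proj (A i ∪ Akj (g i)) '' K)
      (sync2 (A i) (Akj (g i)) (L i) (proj (Akj (g i)) '' K))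
      ((A i ∪ Akj (g i)) ∩ Au))

/-- `supC_{k_j}`. -/
def supCk {n : ℕ} (A : Fin n → Set α) (Akj : Set α) (L : Fin n → Set (List α))
    (Au : Set α) (K : Set (List α)) : Set (List α) :=
  supC (proj Akj '' K) (coordLang A Akj L) (Akj ∩ Au)

/-- `supC_{i+k_j}` (with `j = g i`). -/
def supCik {n m : ℕ} (A : Fin n → Set α) (g : Fin n → Fin m) (Akj : Fin m → Set α)
    (L : Fin n → Set (List α)) (Au : Set α) (K : Set (List α)) (i : Fin n) :
    Set (List α) :=
  supC (proj (A i ∪ Akj (g i)) '' K)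
    (sync2 (A i) (Akj (g i)) (L i) (supCk A (Akj (g i)) L Au K))
    ((A i ∪ Akj (g i)) ∩ Au)

/-- Two-level conditional decomposability of `K` w.r.t. `(A i)`, the high-level
coordinator alphabet `Ak` and the low-level coordinator alphabets `Akj j`. -/
def TwoLevelCD {n m : ℕ} (A : Fin n → Set α) (g : Fin n → Fin m) (Ak : Set α)
    (Akj : Fin m → Set α) (K : Set (List α)) : Prop :=
  K = SyncProd (fun r : Fin m => (⋃ i ∈ {i | g i = r}, A i) ∪ Ak)
        (fun r => proj ((⋃ i ∈ {i | g i = r}, A i) ∪ Ak) '' K) ∧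
  ∀ r : Fin m, proj ((⋃ i ∈ {i | g i = r}, A i) ∪ Ak) '' K =
    SyncProd (fun i : {i : Fin n // g i = r} => A i.1 ∪ Akj r)
      (fun i => proj (A i.1 ∪ Akj r) '' K)

/-- The supremal two-level conditionally controllable sublanguage of `K`. -/
def supTwoCC {n m : ℕ} (A : Fin n → Set α) (g : Fin n → Fin m) (Akj : Fin m → Set α)
    (L : Fin n → Set (List α)) (Au : Set α) (K : Set (List α)) : Set (List α) :=
  ⋃₀ {K' | K' ⊆ K ∧ PrefixClosed K' ∧ TwoLevelCC A g Akj L Au K'}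

/-!
For `s ∈ K` and an uncontrollable `a` with `s a` in the plant, every projection of `s a` lands
in the corresponding projection of `K`: if `a` moves the coordinator, controllability of
`P_k(K)` gives `P_k(s a) ∈ P_k(K)`, which puts `P_{i+k}(s a)` in `L_i ‖ P_k(K)`, and then
controllability of `P_{i+k}(K)` gives `P_{i+k}(s a) ∈ P_{i+k}(K)`. Conditional
decomposability reassembles these projections into `s a ∈ K`.
-/

lemma proj_append_singleton_of_mem {B : Set α} {a : α} (h : a ∈ B) (w : List α) :
    proj B (w ++ [a]) = proj B w ++ [a] := by
  simp [proj, h]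

lemma proj_append_singleton_of_notMem {B : Set α} {a : α} (h : a ∉ B) (w : List α) :
    proj B (w ++ [a]) = proj B w := by
  simp [proj, h]

lemma proj_mem_words (B : Set α) (w : List α) : proj B w ∈ Words B := fun _ ha =>
  @of_decide_eq_true _ (Classical.propDecidable _) (List.mem_filter.1 ha).2

lemma proj_proj_of_subset {B C : Set α} (h : B ⊆ C) (w : List α) :
    proj B (proj C w) = proj B w := by
  unfold proj
  rw [List.filter_filter]
  refine List.filter_congr fun a _ => ?_
  by_cases hb : a ∈ B
  · simp [hb, h hb]
  · simp [hb]

lemma append_singleton_mem_words {B : Set α} {w : List α} {a : α}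
    (hw : w ∈ Words B) (ha : a ∈ B) : w ++ [a] ∈ Words B := by
  intro x hx
  rcases List.mem_append.1 hx with hx | hx
  · exact hw x hx
  · rwa [List.mem_singleton.1 hx]

lemma proj_mem_sync2 {B₁ B₂ : Set α} {M₁ M₂ : Set (List α)} {w : List α}
    (h₁ : proj B₁ w ∈ M₁) (h₂ : proj B₂ w ∈ M₂) :
    proj (B₁ ∪ B₂) w ∈ sync2 B₁ B₂ M₁ M₂ := by
  refine ⟨proj_mem_words _ _, ?_, ?_⟩
  · rwa [proj_proj_of_subset Set.subset_union_left]
  · rwa [proj_proj_of_subset Set.subset_union_right]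

lemma Controllable.proj_append_singleton_mem_image {K L : Set (List α)} {B Au : Set α}
    (hc : Controllable (proj B '' K) L (B ∩ Au)) {s : List α} (hs : s ∈ K) {a : α}
    (ha : a ∈ Au) (hL : proj B (s ++ [a]) ∈ L) :
    proj B (s ++ [a]) ∈ proj B '' K := by
  by_cases haB : a ∈ B
  · rw [proj_append_singleton_of_mem haB] at hL ⊢
    exact hc _ ⟨s, hs, rfl⟩ a ⟨haB, ha⟩ hL
  · rw [proj_append_singleton_of_notMem haB]
    exact ⟨s, hs, rfl⟩

theorem stmt_6_general (n : ℕ) (A : Fin n → Set α) (Ak Au : Set α)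
    (hAu : Au ⊆ ⋃ i, A i)
    (L : Fin n → Set (List α)) (Lk : Set (List α))
    (K : Set (List α))
    (hcd : K = SyncProd (fun i => A i ∪ Ak) (fun i => proj (A i ∪ Ak) '' K))
    (hcc1 : Controllable (proj Ak '' K) Lk (Ak ∩ Au))
    (hcc2 : ∀ i, Controllable (proj (A i ∪ Ak) '' K)
        (sync2 (A i) Ak (L i) (proj Ak '' K)) ((A i ∪ Ak) ∩ Au)) :
    Controllable K
      (SyncProd (fun o : Option (Fin n) => o.elim Ak A) (fun o => o.elim Lk L))
      Au := by
  intro s hs a ha ⟨_, hsa⟩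
  have hk : proj Ak (s ++ [a]) ∈ proj Ak '' K :=
    hcc1.proj_append_singleton_mem_image hs ha (hsa none)
  have hik : ∀ i, proj (A i ∪ Ak) (s ++ [a]) ∈ proj (A i ∪ Ak) '' K := fun i =>
    (hcc2 i).proj_append_singleton_mem_image hs ha (proj_mem_sync2 (hsa (some i)) hk)
  obtain ⟨j, haj⟩ := Set.mem_iUnion.1 (hAu ha)
  have hsW : s ∈ Words (⋃ i, A i ∪ Ak) := by
    rw [hcd] at hs
    exact hs.1
  rw [hcd]
  exact ⟨append_singleton_mem_words hsW (Set.mem_iUnion.2 ⟨j, Or.inl haj⟩), hik⟩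

/-- A conditionally decomposable and conditionally controllable
language is controllable w.r.t. the whole plant `‖ L i ‖ Lk` and `Au`. -/
theorem stmt_6 (n : ℕ) (A : Fin n → Set α) (Ak Au : Set α)
    (hsh : ∀ i j, i ≠ j → A i ∩ A j ⊆ Ak) (hAk : Ak ⊆ ⋃ i, A i)
    (hAu : Au ⊆ ⋃ i, A i)
    (L : Fin n → Set (List α)) (Lk : Set (List α))
    (hLW : ∀ i, L i ⊆ Words (A i)) (hLpc : ∀ i, PrefixClosed (L i))
    (hLkW : Lk ⊆ Words Ak) (hLkpc : PrefixClosed Lk)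
    (K : Set (List α))
    (hK : K ⊆ SyncProd (fun o : Option (Fin n) => o.elim Ak A)
        (fun o => o.elim Lk L))
    (hKpc : PrefixClosed K)
    (hcd : K = SyncProd (fun i => A i ∪ Ak) (fun i => proj (A i ∪ Ak) '' K))
    (hcc1 : Controllable (proj Ak '' K) Lk (Ak ∩ Au))
    (hcc2 : ∀ i, Controllable (proj (A i ∪ Ak) '' K)
        (sync2 (A i) Ak (L i) (proj Ak '' K)) ((A i ∪ Ak) ∩ Au)) :
    Controllable K
      (SyncProd (fun o : Option (Fin n) => o.elim Ak A) (fun o => o.elim Lk L))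
      Au :=
  stmt_6_general n A Ak Au hAu L Lk K hcd hcc1 hcc2
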